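/- Let ρ ∈ H^1(𝕋) with ρ ≥ 0 and ∫ρ = N. Define f(x) = (2π/N)∫₀ˣ ρ(s)ds and orbitals φ_k(x) = √(ρ(x)/N) · exp(i k f(x)) for k = 0,…,N−1. Then the orbitals φ_k are pairwise orthonormal in L²(𝕋). -/

import Mathlib

open MeasureTheory

/-- The Lieb orbitals `φ_k(x) = √(ρ(x)/N) exp(i k f(x))` with
`f(x) = (2π/N) ∫₀ˣ ρ`. -/
noncomputable def orbital (ρ : ℝ → ℝ) (N k : ℕ) (x : ℝ) : ℂ :=
  (Real.sqrt (ρ x / N) : ℂ) *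
    Complex.exp (Complex.I * (k : ℂ) *
      (((2 * Real.pi / N) * ∫ s in (0:ℝ)..x, ρ s : ℝ) : ℂ))

/-!
The substitution `u = f(x)`, with `f' = 2πρ/N`, turns `⟨φ_j, φ_k⟩ = (1/N) ∫₀¹ ρ e^{i(k-j)f}` into
`(1/2π) ∫₀^{2π} e^{i(k-j)u} du`, because `f(0) = 0` and `f(1) = 2π`; the latter integral is `1`
for `j = k` and `0` otherwise.
-/

open Complex intervalIntegral
open scoped Real

theorem integral_exp_int_mul_I (m : ℤ) :
    ∫ u in (0 : ℝ)..2 * π, exp (m * I * u) = if m = 0 then (2 * π : ℂ) else 0 := by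
  split_ifs with hm
  · simp [hm]
  · have hmI : (m * I : ℂ) ≠ 0 := mul_ne_zero (Int.cast_ne_zero.mpr hm) I_ne_zero
    rw [integral_exp_mul_complex hmI]
    have : (m * I * ((2 * π : ℝ) : ℂ)) = m * (2 * π * I) := by push_cast; ring
    rw [this, exp_int_mul_two_pi_mul_I]
    simp

theorem integral_deriv_mul_exp_int_mul_I_comp {f f' : ℝ → ℝ} {a b : ℝ}
    (hf : ∀ x ∈ Set.uIcc a b, HasDerivAt f (f' x) x) (hf' : ContinuousOn f' (Set.uIcc a b))
    (m : ℤ) :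
    ∫ x in a..b, (f' x : ℂ) * exp (m * I * f x) = ∫ u in f a..f b, exp (m * I * u) :=
  integral_deriv_smul_comp (g := fun u : ℝ ↦ exp (m * I * u)) hf hf' (by fun_prop)

theorem conj_orbital_mul_orbital (ρ : ℝ → ℝ) (N j k : ℕ) {x : ℝ} (hρx : 0 ≤ ρ x) :
    (starRingEnd ℂ) (orbital ρ N j x) * orbital ρ N k x =
      ((ρ x / N : ℝ) : ℂ) *
        exp (((k : ℤ) - j : ℤ) * I * ((2 * π / N * ∫ s in (0:ℝ)..x, ρ s : ℝ) : ℂ)) := by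
  have hsq : (√(ρ x / N) : ℂ) * √(ρ x / N) = ((ρ x / N : ℝ) : ℂ) := by
    rw [← ofReal_mul, Real.mul_self_sqrt (div_nonneg hρx N.cast_nonneg)]
  simp only [orbital, map_mul, conj_ofReal, ← exp_conj, conj_I, map_natCast]
  rw [mul_mul_mul_comm, hsq, ← exp_add]
  push_cast
  ring_nf

theorem orbitals_orthonormal_general (ρ : ℝ → ℝ) (N : ℕ)
    (hcont : Continuous ρ) (hpos : ∀ x, 0 ≤ ρ x)
    (hint : (∫ x in (0:ℝ)..1, ρ x) = (N : ℝ)) :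
    ∀ j ∈ Finset.range N, ∀ k ∈ Finset.range N,
      (∫ x in (0:ℝ)..1, (starRingEnd ℂ) (orbital ρ N j x) * orbital ρ N k x) =
        if j = k then 1 else 0 := by
  intro j hj k _
  have hN : (N : ℝ) ≠ 0 := Nat.cast_ne_zero.mpr (Finset.nonempty_range_iff.mp ⟨j, hj⟩)
  set f : ℝ → ℝ := fun x ↦ 2 * π / N * ∫ s in (0:ℝ)..x, ρ s
  have hf : ∀ x, HasDerivAt f (2 * π / N * ρ x) x :=
    fun x ↦ ((hcont.integral_hasStrictDerivAt 0 x).hasDerivAt).const_mul _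
  have hf0 : f 0 = 0 := by simp [f]
  have hf1 : f 1 = 2 * π := by simp [f, hint, hN]
  have hkj : ((k : ℤ) - j = 0) ↔ j = k := by omega
  calc (∫ x in (0:ℝ)..1, (starRingEnd ℂ) (orbital ρ N j x) * orbital ρ N k x)
      = (2 * π : ℂ)⁻¹ * ∫ x in (0:ℝ)..1,
          ((2 * π / N * ρ x : ℝ) : ℂ) * exp (((k : ℤ) - j : ℤ) * I * f x) := by
        rw [← intervalIntegral.integral_const_mul]
        refine integral_congr fun x _ ↦ ?_
        rw [conj_orbital_mul_orbital ρ N j k (hpos x)]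
        simp only [f]
        push_cast
        field_simp
    _ = (2 * π : ℂ)⁻¹ * ∫ u in (0:ℝ)..2 * π, exp (((k : ℤ) - j : ℤ) * I * u) := by
        rw [integral_deriv_mul_exp_int_mul_I_comp (fun x _ ↦ hf x) (by fun_prop), hf0, hf1]
    _ = if j = k then 1 else 0 := by
        rw [integral_exp_int_mul_I]
        simp only [hkj]
        split_ifs
        · exact inv_mul_cancel₀ (by exact_mod_cast Real.two_pi_pos.ne')
        · rw [mul_zero]

/-- The orbitals `φ_k`, `k = 0, …, N−1`, are pairwise orthonormal in L²(𝕋). -/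
theorem orbitals_orthonormal (ρ : ℝ → ℝ) (N : ℕ) (hN : 0 < N)
    (hcont : Continuous ρ) (hpos : ∀ x, 0 ≤ ρ x)
    (hper : Function.Periodic ρ 1)
    (hint : (∫ x in (0:ℝ)..1, ρ x) = (N : ℝ)) :
    ∀ j ∈ Finset.range N, ∀ k ∈ Finset.range N,
      (∫ x in (0:ℝ)..1, (starRingEnd ℂ) (orbital ρ N j x) * orbital ρ N k x) =
        if j = k then 1 else 0 :=
  orbitals_orthonormal_general ρ N hcont hpos hint
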